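/- In any n-dimensional semi-symmetric semi-Riemannian manifold of any signature (in particular in any 2-symmetric one), the Riemann and Weyl tensors satisfy R^{ρ}_{αλμ} C_{ρβγδ} + R^{ρ}_{βλμ} C_{αργδ} + R^{ρ}_{γλμ} C_{αβρδ} + R^{ρ}_{δλμ} C_{αβγρ} = 0. -/

import Mathlib

noncomputable section

open scoped BigOperators

/-! ## A local-coordinate framework for semi-Riemannian geometry

A semi-Riemannian manifold is described in a local chart: points are elements of
`Pt n := Fin n → ℝ`, a rank-`q` covariant tensor field is a map
`Pt n → (Fin q → Fin n) → ℝ`, the metric `g` (with inverse `ginv`) determines the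
Christoffel symbols of its Levi-Civita connection, the covariant derivative `covD`,
and the Riemann, Ricci, scalar and Weyl curvatures. -/

/-- Points of a local chart of an `n`-dimensional manifold. -/
abbrev Pt (n : ℕ) : Type := Fin n → ℝ

/-- A rank-`q` (covariant) tensor field, in the chart. -/
abbrev Tensor (n q : ℕ) : Type := Pt n → (Fin q → Fin n) → ℝ

/-- Partial derivative of a scalar field in the `i`-th coordinate direction. -/
def pd {n : ℕ} (i : Fin n) (f : Pt n → ℝ) (x : Pt n) : ℝ :=
  fderiv ℝ f x (Pi.single i 1)

/-- `g` is a smooth metric of arbitrary signature, with (smooth) inverse `ginv`. -/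
def IsMetric {n : ℕ} (g ginv : Pt n → Fin n → Fin n → ℝ) : Prop :=
  (∀ x μ ν, g x μ ν = g x ν μ) ∧
  (∀ μ ν, ContDiff ℝ (⊤ : ℕ∞) fun x => g x μ ν) ∧
  (∀ μ ν, ContDiff ℝ (⊤ : ℕ∞) fun x => ginv x μ ν) ∧
  (∀ x μ ν, (∑ ρ, ginv x μ ρ * g x ρ ν) = if μ = ν then (1 : ℝ) else 0)

/-- The metric `g` has Lorentzian signature `(-,+,…,+)`: at every point there is a
frame in which it takes the form `diag (-1, 1, …, 1)`. -/
def IsLorentzian {n : ℕ} (g : Pt n → Fin n → Fin n → ℝ) : Prop :=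
  ∀ x, ∃ e : Fin n → Fin n → ℝ, ∀ μ ν : Fin n,
    (∑ α, ∑ β, g x α β * e μ α * e ν β) =
      if μ = ν then (if μ.val = 0 then (-1 : ℝ) else 1) else 0

/-- Christoffel symbols `Γ^α_{βγ}` of the Levi-Civita connection of `g`. -/
def christoffel {n : ℕ} (g ginv : Pt n → Fin n → Fin n → ℝ) (x : Pt n) (α β γ : Fin n) : ℝ :=
  (1 / 2) * ∑ ρ, ginv x α ρ *
    (pd β (fun y => g y ρ γ) x + pd γ (fun y => g y ρ β) x - pd ρ (fun y => g y β γ) x)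

/-- Covariant derivative of a rank-`q` covariant tensor field:
`(covD T)_{λ α₁ … α_q} = ∇_λ T_{α₁ … α_q}`; the derivative index comes first. -/
def covD {n q : ℕ} (g ginv : Pt n → Fin n → Fin n → ℝ) (T : Tensor n q) :
    Tensor n (q + 1) := fun x idx =>
  pd (idx 0) (fun y => T y fun i => idx i.succ) x -
    ∑ i : Fin q, ∑ ρ, christoffel g ginv x ρ (idx 0) (idx i.succ) *
      T x (Function.update (fun j => idx j.succ) i ρ)

/-- Covariant derivative `∇_λ k^μ` of a vector field `k^μ`. -/
def covDVec {n : ℕ} (g ginv : Pt n → Fin n → Fin n → ℝ) (k : Pt n → Fin n → ℝ)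
    (x : Pt n) (lam μ : Fin n) : ℝ :=
  pd lam (fun y => k y μ) x + ∑ ρ, christoffel g ginv x μ lam ρ * k x ρ

/-- Riemann curvature tensor `R^α_{βγδ}` of the Levi-Civita connection of `g`. -/
def riemannUp {n : ℕ} (g ginv : Pt n → Fin n → Fin n → ℝ) (x : Pt n) (α β γ δ : Fin n) : ℝ :=
  pd γ (fun y => christoffel g ginv y α δ β) x - pd δ (fun y => christoffel g ginv y α γ β) x +
    ∑ ρ, (christoffel g ginv x α γ ρ * christoffel g ginv x ρ δ β -
          christoffel g ginv x α δ ρ * christoffel g ginv x ρ γ β)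

/-- Fully covariant Riemann tensor `R_{αβγδ} = g_{αρ} R^ρ_{βγδ}`. -/
def riemann {n : ℕ} (g ginv : Pt n → Fin n → Fin n → ℝ) : Tensor n 4 := fun x idx =>
  ∑ ρ, g x (idx 0) ρ * riemannUp g ginv x ρ (idx 1) (idx 2) (idx 3)

/-- Ricci tensor `R_{μν} = R^ρ_{μρν}`. -/
def ricci {n : ℕ} (g ginv : Pt n → Fin n → Fin n → ℝ) : Tensor n 2 := fun x idx =>
  ∑ ρ, riemannUp g ginv x ρ (idx 0) ρ (idx 1)

/-- Scalar curvature `R = g^{μν} R_{μν}`. -/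
def scalarCurv {n : ℕ} (g ginv : Pt n → Fin n → Fin n → ℝ) (x : Pt n) : ℝ :=
  ∑ μ, ∑ ν, ginv x μ ν * ricci g ginv x ![μ, ν]

/-- Weyl conformal tensor `C_{αβλμ}`, defined through the standard decomposition
`R_{αβλμ} = C_{αβλμ} + (2/(n-2)) (R_{α[λ} g_{μ]β} - R_{β[λ} g_{μ]α})
 - (R/((n-1)(n-2))) (g_{αλ} g_{βμ} - g_{αμ} g_{βλ})`. -/
def weyl {n : ℕ} (g ginv : Pt n → Fin n → Fin n → ℝ) : Tensor n 4 := fun x idx =>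
  riemann g ginv x idx -
    (2 / ((n : ℝ) - 2)) *
      ((ricci g ginv x ![idx 0, idx 2] * g x (idx 3) (idx 1) -
        ricci g ginv x ![idx 0, idx 3] * g x (idx 2) (idx 1)) / 2 -
       (ricci g ginv x ![idx 1, idx 2] * g x (idx 3) (idx 0) -
        ricci g ginv x ![idx 1, idx 3] * g x (idx 2) (idx 0)) / 2) +
    (scalarCurv g ginv x / (((n : ℝ) - 1) * ((n : ℝ) - 2))) *
      (g x (idx 0) (idx 2) * g x (idx 1) (idx 3) - g x (idx 0) (idx 3) * g x (idx 1) (idx 2))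

/-- Second-order symmetry (2-symmetry): `∇_μ ∇_ν R_{αβγδ} = 0` everywhere. -/
def TwoSymmetric {n : ℕ} (g ginv : Pt n → Fin n → Fin n → ℝ) : Prop :=
  ∀ x idx, covD g ginv (covD g ginv (riemann g ginv)) x idx = 0

/-- 2-symmetry on a set `D`: `∇_μ ∇_ν R_{αβγδ} = 0` on `D`. -/
def TwoSymmetricOn {n : ℕ} (g ginv : Pt n → Fin n → Fin n → ℝ) (D : Set (Pt n)) : Prop :=
  ∀ x ∈ D, ∀ idx, covD g ginv (covD g ginv (riemann g ginv)) x idx = 0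

/-- Semi-symmetry: `∇_[μ ∇_ν] R_{αβγδ} = 0` everywhere. -/
def SemiSymmetric {n : ℕ} (g ginv : Pt n → Fin n → Fin n → ℝ) : Prop :=
  ∀ x (μ ν α β γ δ : Fin n),
    covD g ginv (covD g ginv (riemann g ginv)) x ![μ, ν, α, β, γ, δ] =
    covD g ginv (covD g ginv (riemann g ginv)) x ![ν, μ, α, β, γ, δ]

/-- `p` is a generic point: the Riemann tensor at `p`, viewed as the endomorphism
`ω_{γδ} ↦ R^{αβ}_{γδ} ω_{γδ}` of the space of 2-forms at `p`, is non-singular. -/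
def GenericAt {n : ℕ} (g ginv : Pt n → Fin n → Fin n → ℝ) (p : Pt n) : Prop :=
  ∀ ω : Fin n → Fin n → ℝ, (∀ γ δ, ω γ δ = -ω δ γ) →
    (∀ α β, (∑ γ, ∑ δ, (∑ σ, ginv p β σ * riemannUp g ginv p α σ γ δ) * ω γ δ) = 0) →
    ω = 0

/-- `k` is a parallel null (nowhere zero) vector field on `D`. -/
def ParallelNullVectorFieldOn {n : ℕ} (g ginv : Pt n → Fin n → Fin n → ℝ)
    (D : Set (Pt n)) (k : Pt n → Fin n → ℝ) : Prop :=
  (∀ x ∈ D, ∀ lam μ, covDVec g ginv k x lam μ = 0) ∧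
  (∀ x ∈ D, (∑ μ, ∑ ν, g x μ ν * k x μ * k x ν) = 0) ∧
  (∀ x ∈ D, k x ≠ 0)

/-- Pullback metric of `g` along a coordinate change `φ`. -/
def pullback {n : ℕ} (g : Pt n → Fin n → Fin n → ℝ) (φ : Pt n → Pt n)
    (x : Pt n) (μ ν : Fin n) : ℝ :=
  ∑ α, ∑ β, g (φ x) α β * pd μ (fun y => φ y α) x * pd ν (fun y => φ y β) x

/-- `k`-th iterated covariant derivative of a rank-`q` tensor field. -/
def covDIter {n : ℕ} (g ginv : Pt n → Fin n → Fin n → ℝ) (q : ℕ) :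
    (k : ℕ) → Tensor n q → Tensor n (q + k)
  | 0, T => T
  | k + 1, T => covD g ginv (covDIter g ginv q k T)

/-- Totally antisymmetric Levi-Civita symbol. -/
def lcSymbol {n : ℕ} (idx : Fin n → Fin n) : ℝ :=
  if h : Function.Bijective idx then ((Equiv.Perm.sign (Equiv.ofBijective idx h) : ℤ) : ℝ) else 0

/-- The metric volume element `n`-form `√|det g| ε_{μ₁…μ_n}`. -/
def volForm {n : ℕ} (g : Pt n → Fin n → Fin n → ℝ) : Tensor n n := fun x idx =>
  Real.sqrt |Matrix.det (Matrix.of (g x))| * lcSymbol idx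

/-- Formal curvature invariants of rank `q`: tensor fields constructed polynomially
from the metric, its inverse, the Riemann tensor, the volume `n`-form, covariant
derivatives, tensor products, (metric) contractions, index permutations, sums and
scalar multiples. -/
inductive TExpr (n : ℕ) : ℕ → Type where
  | metric : TExpr n 2
  | inv : TExpr n 2
  | riem : TExpr n 4
  | eps : TExpr n n
  | cd : {q : ℕ} → TExpr n q → TExpr n (q + 1)
  | tprod : {q r : ℕ} → TExpr n q → TExpr n r → TExpr n (q + r)
  | contr : {q : ℕ} → TExpr n (q + 2) → TExpr n q
  | permute : {q : ℕ} → Equiv.Perm (Fin q) → TExpr n q → TExpr n q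
  | add : {q : ℕ} → TExpr n q → TExpr n q → TExpr n q
  | smul : {q : ℕ} → ℝ → TExpr n q → TExpr n q

/-- Evaluation of a formal curvature invariant as a tensor field. -/
def TExpr.eval {n : ℕ} (g ginv : Pt n → Fin n → Fin n → ℝ) :
    {q : ℕ} → TExpr n q → Tensor n q
  | _, .metric => fun x idx => g x (idx 0) (idx 1)
  | _, .inv => fun x idx => ginv x (idx 0) (idx 1)
  | _, .riem => riemann g ginv
  | _, .eps => volForm g
  | _, .cd e => covD g ginv (TExpr.eval g ginv e)
  | _, .tprod e₁ e₂ => fun x idx =>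
      TExpr.eval g ginv e₁ x (fun i => idx (Fin.castAdd _ i)) *
      TExpr.eval g ginv e₂ x (fun i => idx (Fin.natAdd _ i))
  | _, .contr e => fun x idx =>
      ∑ ρ, ∑ σ, ginv x ρ σ * TExpr.eval g ginv e x (Fin.cons ρ (Fin.cons σ idx))
  | _, .permute π e => fun x idx => TExpr.eval g ginv e x (idx ∘ π)
  | _, .add e₁ e₂ => fun x idx => TExpr.eval g ginv e₁ x idx + TExpr.eval g ginv e₂ x idx
  | _, .smul c e => fun x idx => c * TExpr.eval g ginv e x idx

/-- `e.HasOrderDeg m d`: the invariant `e` is homogeneous of order `m` (number of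
covariant derivatives in each term) and degree `d` (number of Riemann factors in
each term). -/
inductive TExpr.HasOrderDeg {n : ℕ} : {q : ℕ} → TExpr n q → ℕ → ℕ → Prop where
  | metric : HasOrderDeg .metric 0 0
  | inv : HasOrderDeg .inv 0 0
  | riem : HasOrderDeg .riem 0 1
  | eps : HasOrderDeg .eps 0 0
  | cd {q : ℕ} {e : TExpr n q} {m d : ℕ} : HasOrderDeg e m d → HasOrderDeg e.cd (m + 1) d
  | tprod {q r : ℕ} {e₁ : TExpr n q} {e₂ : TExpr n r} {m₁ d₁ m₂ d₂ : ℕ} :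
      HasOrderDeg e₁ m₁ d₁ → HasOrderDeg e₂ m₂ d₂ →
      HasOrderDeg (e₁.tprod e₂) (m₁ + m₂) (d₁ + d₂)
  | contr {q : ℕ} {e : TExpr n (q + 2)} {m d : ℕ} : HasOrderDeg e m d → HasOrderDeg e.contr m d
  | permute {q : ℕ} {π : Equiv.Perm (Fin q)} {e : TExpr n q} {m d : ℕ} :
      HasOrderDeg e m d → HasOrderDeg (e.permute π) m d
  | add {q : ℕ} {e₁ e₂ : TExpr n q} {m d : ℕ} :
      HasOrderDeg e₁ m d → HasOrderDeg e₂ m d → HasOrderDeg (e₁.add e₂) m d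
  | smul {q : ℕ} {c : ℝ} {e : TExpr n q} {m d : ℕ} :
      HasOrderDeg e m d → HasOrderDeg (e.smul c) m d

/-- `P` is the parallel-transport operator along the curve `γ`. -/
def IsTransportAlong {n : ℕ} (g ginv : Pt n → Fin n → Fin n → ℝ)
    (γ : ℝ → Pt n) (P : ℝ → Fin n → Fin n → ℝ) : Prop :=
  (∀ μ ν, P 0 μ ν = if μ = ν then (1 : ℝ) else 0) ∧
  ∀ t μ ν, HasDerivAt (fun s => P s μ ν)
    (-∑ lam, ∑ ρ, christoffel g ginv (γ t) μ lam ρ * deriv (fun s => γ s lam) t * P t ρ ν) t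

/-- The subspace `W` of the tangent space at `p` is invariant under the holonomy
group of `(D, g)` at `p` (parallel transport around smooth loops in `D` based at `p`). -/
def HolonomyInvariantAt {n : ℕ} (g ginv : Pt n → Fin n → Fin n → ℝ) (D : Set (Pt n))
    (p : Pt n) (W : Submodule ℝ (Fin n → ℝ)) : Prop :=
  ∀ γ : ℝ → Pt n, ContDiff ℝ (⊤ : ℕ∞) γ → (∀ t, γ t ∈ D) → γ 0 = p → γ 1 = p →
    ∀ P, IsTransportAlong g ginv γ P →
      ∀ w ∈ W, (fun μ => ∑ ν, P 1 μ ν * w ν) ∈ W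

/-- The holonomy group of `(D,g)` at `p` is reducible: it leaves invariant a
non-trivial subspace of the tangent space. -/
def ReducibleAt {n : ℕ} (g ginv : Pt n → Fin n → Fin n → ℝ) (D : Set (Pt n))
    (p : Pt n) : Prop :=
  ∃ W : Submodule ℝ (Fin n → ℝ), W ≠ ⊥ ∧ W ≠ ⊤ ∧ HolonomyInvariantAt g ginv D p W

/-- The holonomy group of `(D,g)` at `p` is non-degenerately reducible: it leaves
invariant a non-trivial subspace on which `g` is non-degenerate. -/
def NonDegReducibleAt {n : ℕ} (g ginv : Pt n → Fin n → Fin n → ℝ) (D : Set (Pt n))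
    (p : Pt n) : Prop :=
  ∃ W : Submodule ℝ (Fin n → ℝ), W ≠ ⊥ ∧ W ≠ ⊤ ∧ HolonomyInvariantAt g ginv D p W ∧
    ∀ w ∈ W, (∀ u ∈ W, (∑ μ, ∑ ν, g p μ ν * w μ * u ν) = 0) → w = 0

/-! For a matrix `Ω`, `tensorDerivation q Ω` is the natural action of the endomorphism `Ω` of
the tangent space on covariant `q`-tensors, extended as a derivation. Its kernel is closed under
index permutations, tensor products and, when `Ω` is skew for the metric, metric contractions.
The Ricci identity `[∇_μ, ∇_ν] T = -R(∂_μ, ∂_ν) · T` shows that each curvature operator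
`R(∂_λ, ∂_μ)` is skew (since `∇g = 0`) and, for a semi-symmetric metric, annihilates the Riemann
tensor. It therefore annihilates the Ricci tensor, a contraction of `R`, and the Weyl tensor
`C = R - Ric ⊙ g / (n - 2) + s g ⊙ g / (2 (n - 1) (n - 2))`, built from `R`, `Ric` and `g` by
Kulkarni–Nomizu products. The claimed identity is `R(∂_λ, ∂_μ) · C = 0` written out. -/

open Finset Function
open scoped Matrix ContDiff

section TensorAlgebra

variable {n : ℕ}

def tensorDerivation (q : ℕ) :
    Matrix (Fin n) (Fin n) ℝ →ₗ[ℝ] ((Fin q → Fin n) → ℝ) →ₗ[ℝ] (Fin q → Fin n) → ℝ :=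
  LinearMap.mk₂ ℝ (fun Ω T idx => ∑ i, ∑ ρ, Ω ρ (idx i) * T (update idx i ρ))
    (fun _ _ _ => by ext; simp [add_mul, sum_add_distrib])
    (fun _ _ _ => by ext; simp [mul_assoc, mul_sum])
    (fun _ _ _ => by ext; simp [mul_add, sum_add_distrib])
    (fun _ _ _ => by ext; simp [mul_sum, mul_left_comm])

def tensorMul {q r : ℕ} (T : (Fin q → Fin n) → ℝ) (S : (Fin r → Fin n) → ℝ) :
    (Fin (q + r) → Fin n) → ℝ :=
  fun idx => T (idx ∘ Fin.castAdd r) * S (idx ∘ Fin.natAdd q)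

def contract {q : ℕ} (N : Matrix (Fin n) (Fin n) ℝ) (T : (Fin (q + 2) → Fin n) → ℝ) :
    (Fin q → Fin n) → ℝ :=
  fun idx => ∑ ρ, ∑ σ, N ρ σ * T (Fin.cons ρ (Fin.cons σ idx))

def kulkarniNomizu (h k : (Fin 2 → Fin n) → ℝ) : (Fin 4 → Fin n) → ℝ := fun idx =>
  h ![idx 0, idx 2] * k ![idx 1, idx 3] + h ![idx 1, idx 3] * k ![idx 0, idx 2] -
    h ![idx 0, idx 3] * k ![idx 1, idx 2] - h ![idx 1, idx 2] * k ![idx 0, idx 3]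

variable {q : ℕ} (Ω : Matrix (Fin n) (Fin n) ℝ)

theorem tensorDerivation_apply (T : (Fin q → Fin n) → ℝ) (idx : Fin q → Fin n) :
    tensorDerivation q Ω T idx = ∑ i, ∑ ρ, Ω ρ (idx i) * T (update idx i ρ) :=
  rfl

theorem tensorDerivation_cons (T : (Fin (q + 1) → Fin n) → ℝ) (a : Fin n)
    (idx : Fin q → Fin n) :
    tensorDerivation (q + 1) Ω T (Fin.cons a idx) =
      ∑ ρ, Ω ρ a * T (Fin.cons ρ idx) +
        tensorDerivation q Ω (fun idx' => T (Fin.cons a idx')) idx := by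
  simp only [tensorDerivation_apply, Fin.sum_univ_succ, Fin.cons_zero, Fin.cons_succ,
    Fin.update_cons_zero, Fin.cons_update]

theorem tensorDerivation_apply_two (T : (Fin 2 → Fin n) → ℝ) (a b : Fin n) :
    tensorDerivation 2 Ω T ![a, b] = ∑ ρ, Ω ρ a * T ![ρ, b] + ∑ ρ, Ω ρ b * T ![a, ρ] := by
  rw [show ![a, b] = Fin.cons a ![b] from rfl, tensorDerivation_cons,
    show ![b] = Fin.cons b ![] from rfl, tensorDerivation_cons]
  simp [tensorDerivation_apply]

theorem tensorDerivation_apply_four (T : (Fin 4 → Fin n) → ℝ) (a b c d : Fin n) :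
    tensorDerivation 4 Ω T ![a, b, c, d] =
      ∑ ρ, Ω ρ a * T ![ρ, b, c, d] + ∑ ρ, Ω ρ b * T ![a, ρ, c, d] +
        ∑ ρ, Ω ρ c * T ![a, b, ρ, d] + ∑ ρ, Ω ρ d * T ![a, b, c, ρ] := by
  rw [show ![a, b, c, d] = Fin.cons a ![b, c, d] from rfl, tensorDerivation_cons,
    show ![b, c, d] = Fin.cons b ![c, d] from rfl, tensorDerivation_cons,
    show ![c, d] = Fin.cons c ![d] from rfl, tensorDerivation_cons,
    show ![d] = Fin.cons d ![] from rfl, tensorDerivation_cons]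
  simp [tensorDerivation_apply, add_assoc]

theorem tensorDerivation_comp_perm (σ : Equiv.Perm (Fin q)) (T : (Fin q → Fin n) → ℝ)
    (idx : Fin q → Fin n) :
    tensorDerivation q Ω (fun idx' => T (idx' ∘ σ)) idx = tensorDerivation q Ω T (idx ∘ σ) := by
  simp only [tensorDerivation_apply, update_comp_equiv]
  exact (Equiv.sum_comp σ _).symm.trans (by simp)

theorem tensorDerivation_tensorMul {r : ℕ} (T : (Fin q → Fin n) → ℝ)
    (S : (Fin r → Fin n) → ℝ) :
    tensorDerivation (q + r) Ω (tensorMul T S) =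
      tensorMul (tensorDerivation q Ω T) S + tensorMul T (tensorDerivation r Ω S) := by
  ext idx
  have hcast : ∀ i ρ, update idx (Fin.castAdd r i) ρ ∘ Fin.castAdd r =
      update (idx ∘ Fin.castAdd r) i ρ :=
    update_comp_eq_of_injective _ (Fin.castAdd_injective q r)
  have hnat : ∀ i ρ, update idx (Fin.natAdd q i) ρ ∘ Fin.natAdd q =
      update (idx ∘ Fin.natAdd q) i ρ :=
    update_comp_eq_of_injective _ (Fin.natAdd_injective r q)
  have hcast_nat : ∀ i ρ, update idx (Fin.castAdd r i) ρ ∘ Fin.natAdd q = idx ∘ Fin.natAdd q :=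
    fun i ρ => update_comp_eq_of_forall_ne _ _ fun j h => by
      rw [Fin.ext_iff, Fin.val_natAdd, Fin.val_castAdd] at h; omega
  have hnat_cast : ∀ i ρ, update idx (Fin.natAdd q i) ρ ∘ Fin.castAdd r = idx ∘ Fin.castAdd r :=
    fun i ρ => update_comp_eq_of_forall_ne _ _ fun j h => by
      rw [Fin.ext_iff, Fin.val_natAdd, Fin.val_castAdd] at h; omega
  simp only [tensorDerivation_apply, tensorMul, Pi.add_apply, Fin.sum_univ_add, hcast, hnat,
    hcast_nat, hnat_cast, sum_mul, mul_sum, comp_apply]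
  congr 1 <;> exact sum_congr rfl fun _ _ => sum_congr rfl fun _ _ => by ring

/-- The terms in which both derivations act on the same slot `j` make up the derivation by
`B * A`; the remaining ones are written out. -/
theorem tensorDerivation_tensorDerivation_apply (A B : Matrix (Fin n) (Fin n) ℝ)
    (T : (Fin q → Fin n) → ℝ) (idx : Fin q → Fin n) :
    tensorDerivation q A (tensorDerivation q B T) idx =
      tensorDerivation q (B * A) T idx +
        ∑ j, ∑ k ∈ univ.erase j, ∑ ρ, ∑ σ,
          A ρ (idx j) * B σ (idx k) * T (update (update idx j ρ) k σ) := by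
  have hsplit : ∀ j ρ, ∑ k, ∑ σ, B σ (update idx j ρ k) * T (update (update idx j ρ) k σ) =
      ∑ σ, B σ ρ * T (update idx j σ) +
        ∑ k ∈ univ.erase j, ∑ σ, B σ (idx k) * T (update (update idx j ρ) k σ) := by
    intro j ρ
    rw [← add_sum_erase _ _ (mem_univ j)]
    congr 1
    · simp
    · exact sum_congr rfl fun k hk => by rw [update_of_ne (ne_of_mem_erase hk)]
  simp only [tensorDerivation_apply, hsplit, mul_add, sum_add_distrib, Matrix.mul_apply,
    sum_mul, mul_sum]
  congr 1
  · exact sum_congr rfl fun j _ => by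
      rw [sum_comm]; exact sum_congr rfl fun _ _ => sum_congr rfl fun _ _ => by ring
  · exact sum_congr rfl fun j _ => by
      rw [sum_comm]; simp only [mul_assoc]

theorem tensorDerivation_commutator (A B : Matrix (Fin n) (Fin n) ℝ)
    (T : (Fin q → Fin n) → ℝ) :
    tensorDerivation q A (tensorDerivation q B T) -
        tensorDerivation q B (tensorDerivation q A T) =
      tensorDerivation q (B * A - A * B) T := by
  ext idx
  have hoff : ∑ j, ∑ k ∈ univ.erase j, ∑ ρ, ∑ σ,
        A ρ (idx j) * B σ (idx k) * T (update (update idx j ρ) k σ) =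
      ∑ j, ∑ k ∈ univ.erase j, ∑ ρ, ∑ σ,
        B ρ (idx j) * A σ (idx k) * T (update (update idx j ρ) k σ) := by
    rw [sum_comm' (t' := univ) (s' := fun k => univ.erase k) (by simp [and_comm, eq_comm])]
    refine sum_congr rfl fun j _ => sum_congr rfl fun k hk => ?_
    rw [sum_comm]
    refine sum_congr rfl fun ρ _ => sum_congr rfl fun σ _ => ?_
    rw [update_comm (ne_of_mem_erase hk)]
    ring
  simp only [Pi.sub_apply, tensorDerivation_tensorDerivation_apply, hoff, map_sub,
    LinearMap.sub_apply]
  ring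

theorem mul_add_mul_transpose_eq_zero {G N : Matrix (Fin n) (Fin n) ℝ} (hNG : N * G = 1)
    (hGN : G * N = 1) (hΩG : Ωᵀ * G + G * Ω = 0) : Ω * N + N * Ωᵀ = 0 :=
  calc Ω * N + N * Ωᵀ = N * (Ωᵀ * G + G * Ω) * N := by
        simp only [Matrix.mul_add, Matrix.add_mul, Matrix.mul_assoc, hGN, Matrix.mul_one]
        rw [← Matrix.mul_assoc N G, hNG, Matrix.one_mul, add_comm]
    _ = 0 := by rw [hΩG, Matrix.mul_zero, Matrix.zero_mul]

theorem tensorDerivation_contract {N : Matrix (Fin n) (Fin n) ℝ}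
    (hΩN : Ω * N + N * Ωᵀ = 0) (T : (Fin (q + 2) → Fin n) → ℝ) :
    tensorDerivation q Ω (contract N T) = contract N (tensorDerivation (q + 2) Ω T) := by
  ext idx
  set U : Fin n → Fin n → ℝ := fun a b => T (Fin.cons a (Fin.cons b idx))
  have hcontract :
      contract N T = ∑ ρ, ∑ σ, N ρ σ • fun idx' => T (Fin.cons ρ (Fin.cons σ idx')) := by
    ext; simp [contract, Finset.sum_apply]
  -- the derivation hitting the two contracted slots produces `Ω * N + N * Ωᵀ`
  have hslots : ∑ ρ, ∑ σ, N ρ σ * ∑ τ, Ω τ ρ * U τ σ +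
      ∑ ρ, ∑ σ, N ρ σ * ∑ τ, Ω τ σ * U ρ τ = ∑ a, ∑ b, (Ω * N + N * Ωᵀ) a b * U a b := by
    simp only [Matrix.add_apply, Matrix.mul_apply, Matrix.transpose_apply, add_mul,
      sum_add_distrib, sum_mul, mul_sum]
    congr 1
    · rw [sum_comm]
      refine (sum_congr rfl fun b _ => sum_comm).trans ?_
      rw [sum_comm]
      exact sum_congr rfl fun _ _ => sum_congr rfl fun _ _ => sum_congr rfl fun _ _ => by ring
    · exact sum_congr rfl fun _ _ => by
        rw [sum_comm]
        exact sum_congr rfl fun _ _ => sum_congr rfl fun _ _ => by ring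
  rw [hΩN] at hslots
  rw [hcontract]
  simp only [contract, tensorDerivation_cons, map_sum, map_smul, Finset.sum_apply,
    Pi.smul_apply, smul_eq_mul, mul_add, sum_add_distrib]
  simp only [Matrix.zero_apply, zero_mul, sum_const_zero] at hslots
  linear_combination -hslots

theorem tensorDerivation_kulkarniNomizu {h k : (Fin 2 → Fin n) → ℝ}
    (hh : tensorDerivation 2 Ω h = 0) (hk : tensorDerivation 2 Ω k = 0) :
    tensorDerivation 4 Ω (kulkarniNomizu h k) = 0 := by
  set U : (Fin 4 → Fin n) → ℝ := fun idx =>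
    (tensorMul h k + tensorMul k h) (idx ∘ Equiv.swap 1 2)
  have hmul : ∀ (a b : (Fin 2 → Fin n) → ℝ) (i : Fin 4 → Fin n),
      tensorMul a b i = a ![i 0, i 1] * b ![i 2, i 3] := by
    intro a b i
    have hcast : i ∘ Fin.castAdd 2 = ![i 0, i 1] := by funext l; fin_cases l <;> rfl
    have hnat : i ∘ Fin.natAdd 2 = ![i 2, i 3] := by funext l; fin_cases l <;> rfl
    rw [tensorMul, hcast, hnat]
  have hKN : kulkarniNomizu h k = U - fun idx => U (idx ∘ Equiv.swap 2 3) := by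
    ext idx
    simp only [U, kulkarniNomizu, hmul, Pi.add_apply, Pi.sub_apply, comp_apply]
    simp +decide only [ne_eq, Equiv.swap_apply_of_ne_of_ne, Equiv.swap_apply_left,
      Equiv.swap_apply_right]
    ring
  have hprod : ∀ {a b : (Fin 2 → Fin n) → ℝ}, tensorDerivation 2 Ω a = 0 →
      tensorDerivation 2 Ω b = 0 → tensorDerivation 4 Ω (tensorMul a b) = 0 := by
    intro a b ha hb
    have := tensorDerivation_tensorMul Ω a b
    rw [ha, hb] at this
    exact this.trans (by ext; simp [tensorMul])
  have hU : tensorDerivation 4 Ω U = 0 := by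
    ext idx
    rw [tensorDerivation_comp_perm, map_add, Pi.add_apply, hprod hh hk, hprod hk hh]
    simp
  ext idx
  rw [hKN, map_sub, Pi.sub_apply, tensorDerivation_comp_perm Ω (Equiv.swap 2 3) U, hU]
  simp

end TensorAlgebra

section Calculus

variable {n : ℕ}

def pdMatrix (i : Fin n) (Ω : Pt n → Matrix (Fin n) (Fin n) ℝ) (x : Pt n) :
    Matrix (Fin n) (Fin n) ℝ :=
  Matrix.of fun ρ a => pd i (fun y => Ω y ρ a) x

variable {f h : Pt n → ℝ} {x : Pt n}

theorem pd_sub (hf : DifferentiableAt ℝ f x) (hh : DifferentiableAt ℝ h x) (i : Fin n) :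
    pd i (fun y => f y - h y) x = pd i f x - pd i h x := by
  simp [pd, fderiv_fun_sub hf hh]

theorem pd_mul (hf : DifferentiableAt ℝ f x) (hh : DifferentiableAt ℝ h x) (i : Fin n) :
    pd i (fun y => f y * h y) x = pd i f x * h x + f x * pd i h x := by
  simp [pd, fderiv_fun_mul hf hh, add_comm, mul_comm]

theorem pd_sum {ι : Type*} {s : Finset ι} {F : ι → Pt n → ℝ}
    (hF : ∀ j ∈ s, DifferentiableAt ℝ (F j) x) (i : Fin n) :
    pd i (fun y => ∑ j ∈ s, F j y) x = ∑ j ∈ s, pd i (F j) x := by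
  simp [pd, fderiv_fun_sum hF]

theorem ContDiff.pd (hf : ContDiff ℝ ∞ f) (i : Fin n) : ContDiff ℝ ∞ (pd i f) :=
  (hf.fderiv_right le_rfl).clm_apply contDiff_const

theorem pd_comm (hf : ContDiffAt ℝ 2 f x) (i j : Fin n) :
    pd i (pd j f) x = pd j (pd i f) x := by
  have hdiff : DifferentiableAt ℝ (fderiv ℝ f) x :=
    (hf.fderiv_right (m := 1) le_rfl).differentiableAt one_ne_zero
  have hsecond : ∀ u v : Fin n,
      pd u (pd v f) x = fderiv ℝ (fderiv ℝ f) x (Pi.single u 1) (Pi.single v 1) := by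
    intro u v
    change fderiv ℝ (fun y => fderiv ℝ f y (Pi.single v 1)) x (Pi.single u 1) = _
    rw [fderiv_clm_apply hdiff (differentiableAt_const _)]
    simp
  rw [hsecond, hsecond,
    hf.isSymmSndFDerivAt (by simp [minSmoothness_of_isRCLikeNormedField])]

theorem pd_tensorDerivation {q : ℕ} {Ω : Pt n → Matrix (Fin n) (Fin n) ℝ} {T : Tensor n q}
    (hΩ : ∀ ρ a, DifferentiableAt ℝ (fun y => Ω y ρ a) x)
    (hT : ∀ idx, DifferentiableAt ℝ (fun y => T y idx) x) (i : Fin n) (idx : Fin q → Fin n) :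
    pd i (fun y => tensorDerivation q (Ω y) (T y) idx) x =
      tensorDerivation q (pdMatrix i Ω x) (T x) idx +
        tensorDerivation q (Ω x) (fun idx' => pd i (fun y => T y idx') x) idx := by
  have hterm : ∀ j ρ,
      DifferentiableAt ℝ (fun y => Ω y ρ (idx j) * T y (update idx j ρ)) x :=
    fun j ρ => (hΩ _ _).mul (hT _)
  simp only [tensorDerivation_apply, pdMatrix, Matrix.of_apply, ← sum_add_distrib]
  rw [pd_sum fun j _ => DifferentiableAt.fun_sum fun ρ _ => hterm j ρ]
  refine sum_congr rfl fun j _ => ?_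
  rw [pd_sum fun ρ _ => hterm j ρ]
  exact sum_congr rfl fun ρ _ => pd_mul (hΩ _ _) (hT _) i

theorem contDiff_tensorDerivation {q : ℕ} {Ω : Pt n → Matrix (Fin n) (Fin n) ℝ}
    {T : Tensor n q} (hΩ : ∀ ρ a, ContDiff ℝ ∞ fun y => Ω y ρ a)
    (hT : ∀ idx, ContDiff ℝ ∞ fun y => T y idx) (idx : Fin q → Fin n) :
    ContDiff ℝ ∞ fun y => tensorDerivation q (Ω y) (T y) idx := by
  have hterm : ∀ j ρ, ContDiff ℝ ∞ fun y => Ω y ρ (idx j) * T y (update idx j ρ) :=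
    fun j ρ => (hΩ _ _).mul (hT _)
  simp only [tensorDerivation_apply]
  exact ContDiff.sum fun j _ => ContDiff.sum fun ρ _ => hterm j ρ

end Calculus

section LeviCivita

variable {n : ℕ}

def christoffelMatrix (g ginv : Pt n → Fin n → Fin n → ℝ) (x : Pt n) (ν : Fin n) :
    Matrix (Fin n) (Fin n) ℝ :=
  Matrix.of fun ρ a => christoffel g ginv x ρ ν a

def curvatureMatrix (g ginv : Pt n → Fin n → Fin n → ℝ) (x : Pt n) (μ ν : Fin n) :
    Matrix (Fin n) (Fin n) ℝ :=
  Matrix.of fun ρ a => riemannUp g ginv x ρ a μ ν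

def metricTensor (g : Pt n → Fin n → Fin n → ℝ) : Tensor n 2 :=
  fun x idx => g x (idx 0) (idx 1)

theorem curvatureMatrix_eq (g ginv : Pt n → Fin n → Fin n → ℝ) (x : Pt n) (μ ν : Fin n) :
    curvatureMatrix g ginv x μ ν =
      pdMatrix μ (christoffelMatrix g ginv · ν) x - pdMatrix ν (christoffelMatrix g ginv · μ) x +
        (christoffelMatrix g ginv x μ * christoffelMatrix g ginv x ν -
          christoffelMatrix g ginv x ν * christoffelMatrix g ginv x μ) := by
  ext ρ a
  simp [curvatureMatrix, pdMatrix, christoffelMatrix, riemannUp, Matrix.mul_apply,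
    sum_sub_distrib]

theorem covD_cons {q : ℕ} (g ginv : Pt n → Fin n → Fin n → ℝ) (T : Tensor n q) (x : Pt n)
    (ν : Fin n) (idx : Fin q → Fin n) :
    covD g ginv T x (Fin.cons ν idx) =
      pd ν (fun y => T y idx) x -
        tensorDerivation q (christoffelMatrix g ginv x ν) (T x) idx := by
  simp [covD, tensorDerivation_apply, christoffelMatrix]

namespace IsMetric

variable {g ginv : Pt n → Fin n → Fin n → ℝ} (hg : IsMetric g ginv)
include hg

theorem ginv_mul_g (x : Pt n) : Matrix.of (ginv x) * Matrix.of (g x) = 1 := by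
  ext μ ν
  simpa [Matrix.mul_apply, Matrix.one_apply] using hg.2.2.2 x μ ν

theorem g_mul_ginv (x : Pt n) : Matrix.of (g x) * Matrix.of (ginv x) = 1 :=
  mul_eq_one_comm.mp (hg.ginv_mul_g x)

theorem ginv_symm (x : Pt n) (μ ν : Fin n) : ginv x μ ν = ginv x ν μ := by
  have hG : (Matrix.of (g x))ᵀ = Matrix.of (g x) := by
    ext; simp [hg.1 x]
  have hN : (Matrix.of (g x))⁻¹ = Matrix.of (ginv x) :=
    Matrix.inv_eq_left_inv (hg.ginv_mul_g x)
  have := Matrix.transpose_nonsing_inv (Matrix.of (g x))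
  rw [hG, hN] at this
  exact congrFun (congrFun this ν) μ

theorem contDiff_christoffel (α β γ : Fin n) :
    ContDiff ℝ ∞ fun x => christoffel g ginv x α β γ :=
  contDiff_const.mul (ContDiff.sum fun ρ _ => (hg.2.2.1 α ρ).mul
    ((((hg.2.1 ρ γ).pd β).add ((hg.2.1 ρ β).pd γ)).sub ((hg.2.1 β γ).pd ρ)))

theorem contDiff_riemann (idx : Fin 4 → Fin n) :
    ContDiff ℝ ∞ fun x => riemann g ginv x idx := by
  have hΓ := hg.contDiff_christoffel
  have hR : ∀ α β γ δ, ContDiff ℝ ∞ fun x => riemannUp g ginv x α β γ δ := fun α β γ δ =>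
    ((((hΓ α δ β).pd γ).sub ((hΓ α γ β).pd δ))).add
      (ContDiff.sum fun ρ _ => ((hΓ α γ ρ).mul (hΓ ρ δ β)).sub ((hΓ α δ ρ).mul (hΓ ρ γ β)))
  exact ContDiff.sum fun ρ _ => (hg.2.1 _ ρ).mul (hR ρ _ _ _)

theorem christoffel_symm (x : Pt n) (α β γ : Fin n) :
    christoffel g ginv x α β γ = christoffel g ginv x α γ β := by
  unfold christoffel
  congr 1
  refine sum_congr rfl fun ρ _ => ?_
  rw [show (fun y => g y β γ) = fun y => g y γ β from funext fun y => hg.1 y β γ]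
  ring

theorem sum_g_mul_christoffel (x : Pt n) (ν lam μ : Fin n) :
    ∑ ρ, g x ρ ν * christoffel g ginv x ρ lam μ =
      (1 / 2) * (pd lam (fun y => g y ν μ) x + pd μ (fun y => g y ν lam) x -
        pd ν (fun y => g y lam μ) x) := by
  have hδ : ∀ σ, ∑ ρ, g x ν ρ * ginv x ρ σ = if ν = σ then 1 else 0 := fun σ => by
    simpa [Matrix.mul_apply, Matrix.one_apply] using
      congrFun (congrFun (hg.g_mul_ginv x) ν) σ
  set P : Fin n → ℝ := fun σ =>
    pd lam (fun y => g y σ μ) x + pd μ (fun y => g y σ lam) x - pd σ (fun y => g y lam μ) x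
  calc ∑ ρ, g x ρ ν * christoffel g ginv x ρ lam μ
      = (1 / 2) * ∑ σ, (∑ ρ, g x ν ρ * ginv x ρ σ) * P σ := by
        simp only [christoffel, mul_sum, sum_mul]
        rw [sum_comm]
        refine sum_congr rfl fun σ _ => sum_congr rfl fun ρ _ => ?_
        rw [hg.1 x ρ ν]
        ring
    _ = (1 / 2) * P ν := by simp [hδ]

theorem covD_metricTensor : covD g ginv (metricTensor g) = 0 := by
  ext x idx
  obtain ⟨a, b, c, rfl⟩ : ∃ a b c, idx = ![a, b, c] :=
    ⟨idx 0, idx 1, idx 2, by funext i; fin_cases i <;> rfl⟩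
  have hsymm : ∀ u v, (fun y => g y u v) = fun y => g y v u :=
    fun u v => funext fun y => hg.1 y u v
  have h1 : ∑ ρ, christoffel g ginv x ρ a b * g x ρ c =
      ∑ ρ, g x ρ c * christoffel g ginv x ρ a b :=
    sum_congr rfl fun ρ _ => mul_comm _ _
  have h2 : ∑ ρ, christoffel g ginv x ρ a c * g x b ρ =
      ∑ ρ, g x ρ b * christoffel g ginv x ρ a c :=
    sum_congr rfl fun ρ _ => by rw [hg.1 x b ρ, mul_comm]
  rw [show (![a, b, c] : Fin 3 → Fin n) = Fin.cons a ![b, c] from rfl, covD_cons,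
    tensorDerivation_apply_two]
  simp only [metricTensor, christoffelMatrix, Matrix.of_apply, Matrix.cons_val_zero,
    Matrix.cons_val_one, Pi.zero_apply]
  rw [h1, h2, hg.sum_g_mul_christoffel, hg.sum_g_mul_christoffel, hsymm c b, hsymm c a,
    hsymm b a]
  ring

theorem covD_covD_cons {q : ℕ} {T : Tensor n q} (hT : ∀ idx, ContDiff ℝ ∞ fun x => T x idx)
    (x : Pt n) (μ ν : Fin n) (idx : Fin q → Fin n) :
    covD g ginv (covD g ginv T) x (Fin.cons μ (Fin.cons ν idx)) =
      pd μ (pd ν fun y => T y idx) x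
        - tensorDerivation q (pdMatrix μ (christoffelMatrix g ginv · ν) x) (T x) idx
        - tensorDerivation q (christoffelMatrix g ginv x ν)
            (fun i => pd μ (fun y => T y i) x) idx
        - tensorDerivation q (christoffelMatrix g ginv x μ)
            (fun i => pd ν (fun y => T y i) x) idx
        + tensorDerivation q (christoffelMatrix g ginv x μ)
            (tensorDerivation q (christoffelMatrix g ginv x ν) (T x)) idx
        - ∑ ρ, christoffel g ginv x ρ μ ν * covD g ginv T x (Fin.cons ρ idx) := by
  have hΓ : ∀ ρ a, ContDiff ℝ ∞ fun y => christoffelMatrix g ginv y ν ρ a :=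
    fun ρ a => hg.contDiff_christoffel ρ ν a
  have hdiff : ∀ {f : Pt n → ℝ}, ContDiff ℝ ∞ f → DifferentiableAt ℝ f x :=
    fun hf => (hf.differentiable (by simp)).differentiableAt
  have hcovD : (fun y => covD g ginv T y (Fin.cons ν idx)) = fun y =>
      pd ν (fun z => T z idx) y - tensorDerivation q (christoffelMatrix g ginv y ν) (T y) idx :=
    funext fun y => covD_cons g ginv T y ν idx
  have hcovD' : (fun i => covD g ginv T x (Fin.cons ν i)) =
      (fun i => pd ν (fun y => T y i) x) -
        tensorDerivation q (christoffelMatrix g ginv x ν) (T x) :=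
    funext fun i => covD_cons g ginv T x ν i
  rw [covD_cons, tensorDerivation_cons, hcovD, hcovD',
    pd_sub (hdiff ((hT idx).pd ν)) (hdiff (contDiff_tensorDerivation hΓ hT idx)),
    pd_tensorDerivation (fun ρ a => hdiff (hΓ ρ a)) (fun i => hdiff (hT i)), map_sub]
  simp only [christoffelMatrix, Matrix.of_apply, Pi.sub_apply]
  ring

theorem ricci_identity {q : ℕ} {T : Tensor n q} (hT : ∀ idx, ContDiff ℝ ∞ fun x => T x idx)
    (x : Pt n) (μ ν : Fin n) (idx : Fin q → Fin n) :
    covD g ginv (covD g ginv T) x (Fin.cons μ (Fin.cons ν idx)) -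
        covD g ginv (covD g ginv T) x (Fin.cons ν (Fin.cons μ idx)) =
      -tensorDerivation q (curvatureMatrix g ginv x μ ν) (T x) idx := by
  have hcomm := congrFun (tensorDerivation_commutator (christoffelMatrix g ginv x μ)
    (christoffelMatrix g ginv x ν) (T x)) idx
  have hsymm : ∑ ρ, christoffel g ginv x ρ μ ν * covD g ginv T x (Fin.cons ρ idx) =
      ∑ ρ, christoffel g ginv x ρ ν μ * covD g ginv T x (Fin.cons ρ idx) :=
    sum_congr rfl fun ρ _ => by rw [hg.christoffel_symm]
  rw [hg.covD_covD_cons hT, hg.covD_covD_cons hT,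
    pd_comm ((hT idx).contDiffAt.of_le (WithTop.coe_le_coe.mpr le_top)), curvatureMatrix_eq,
    hsymm]
  simp only [map_add, map_sub, LinearMap.add_apply, LinearMap.sub_apply, Pi.add_apply,
    Pi.sub_apply] at hcomm ⊢
  linear_combination hcomm

theorem tensorDerivation_metricTensor (x : Pt n) (lam μ : Fin n) :
    tensorDerivation 2 (curvatureMatrix g ginv x lam μ) (metricTensor g x) = 0 := by
  ext idx
  have h := hg.ricci_identity (T := metricTensor g) (fun _ => hg.2.1 _ _) x lam μ idx
  have hzero : covD g ginv (0 : Tensor n (2 + 1)) = 0 := by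
    ext; simp [covD, pd]
  rw [hg.covD_metricTensor, hzero] at h
  simpa using h

theorem curvatureMatrix_mul_ginv_add (x : Pt n) (lam μ : Fin n) :
    curvatureMatrix g ginv x lam μ * Matrix.of (ginv x) +
      Matrix.of (ginv x) * (curvatureMatrix g ginv x lam μ)ᵀ = 0 := by
  refine mul_add_mul_transpose_eq_zero _ (hg.ginv_mul_g x) (hg.g_mul_ginv x) ?_
  ext a b
  have h := congrFun (hg.tensorDerivation_metricTensor x lam μ) ![a, b]
  simpa [tensorDerivation_apply_two, metricTensor, Matrix.mul_apply, mul_comm] using h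

theorem tensorDerivation_riemann (hss : SemiSymmetric g ginv) (x : Pt n) (lam μ : Fin n) :
    tensorDerivation 4 (curvatureMatrix g ginv x lam μ) (riemann g ginv x) = 0 := by
  ext idx
  obtain ⟨α, β, γ, δ, rfl⟩ : ∃ α β γ δ, idx = ![α, β, γ, δ] :=
    ⟨idx 0, idx 1, idx 2, idx 3, by funext i; fin_cases i <;> rfl⟩
  have h := hg.ricci_identity hg.contDiff_riemann x lam μ ![α, β, γ, δ]
  rw [show (Fin.cons lam (Fin.cons μ ![α, β, γ, δ]) : Fin 6 → Fin n) = ![lam, μ, α, β, γ, δ]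
      from rfl, show (Fin.cons μ (Fin.cons lam ![α, β, γ, δ]) : Fin 6 → Fin n) =
      ![μ, lam, α, β, γ, δ] from rfl, hss, sub_self] at h
  simpa using h.symm

theorem ricci_eq_contract (x : Pt n) :
    ricci g ginv x =
      contract (Matrix.of (ginv x)) fun idx => riemann g ginv x (idx ∘ Equiv.swap 1 2) := by
  ext idx
  have hδ : ∀ σ τ, ∑ ρ, ginv x ρ σ * g x ρ τ = if σ = τ then 1 else 0 := fun σ τ => by
    simpa [Matrix.mul_apply, Matrix.one_apply, hg.ginv_symm x σ] using
      congrFun (congrFun (hg.ginv_mul_g x) σ) τ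
  have hperm : ∀ ρ σ, (Fin.cons ρ (Fin.cons σ idx) : Fin 4 → Fin n) ∘ Equiv.swap 1 2 =
      ![ρ, idx 0, σ, idx 1] := by
    intro ρ σ; funext k; fin_cases k <;> rfl
  calc ricci g ginv x idx
      = ∑ σ, ∑ τ, (∑ ρ, ginv x ρ σ * g x ρ τ) * riemannUp g ginv x τ (idx 0) σ (idx 1) := by
        simp [ricci, hδ]
    _ = ∑ ρ, ∑ σ, ∑ τ, ginv x ρ σ * (g x ρ τ * riemannUp g ginv x τ (idx 0) σ (idx 1)) := by
        simp only [sum_mul]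
        conv_lhs => enter [2, σ]; rw [sum_comm]
        rw [sum_comm]
        exact sum_congr rfl fun _ _ => sum_congr rfl fun _ _ => sum_congr rfl fun _ _ => by ring
    _ = _ := by
        simp only [contract, hperm]
        simp [riemann, mul_sum]

theorem tensorDerivation_ricci (hss : SemiSymmetric g ginv) (x : Pt n) (lam μ : Fin n) :
    tensorDerivation 2 (curvatureMatrix g ginv x lam μ) (ricci g ginv x) = 0 := by
  ext idx
  rw [hg.ricci_eq_contract,
    tensorDerivation_contract _ (hg.curvatureMatrix_mul_ginv_add x lam μ)]
  simp [contract, tensorDerivation_comp_perm, hg.tensorDerivation_riemann hss]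

theorem weyl_eq_kulkarniNomizu (x : Pt n) :
    weyl g ginv x = riemann g ginv x
      - (1 / ((n : ℝ) - 2)) • kulkarniNomizu (ricci g ginv x) (metricTensor g x)
      + (scalarCurv g ginv x / (((n : ℝ) - 1) * ((n : ℝ) - 2)) / 2) •
          kulkarniNomizu (metricTensor g x) (metricTensor g x) := by
  ext idx
  simp only [weyl, kulkarniNomizu, metricTensor, Pi.add_apply, Pi.sub_apply, Pi.smul_apply,
    smul_eq_mul, Matrix.cons_val_zero, Matrix.cons_val_one, hg.1 x (idx 1), hg.1 x (idx 0)]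
  ring

theorem tensorDerivation_weyl (hss : SemiSymmetric g ginv) (x : Pt n) (lam μ : Fin n) :
    tensorDerivation 4 (curvatureMatrix g ginv x lam μ) (weyl g ginv x) = 0 := by
  have hG := hg.tensorDerivation_metricTensor x lam μ
  have hRic := hg.tensorDerivation_ricci hss x lam μ
  rw [hg.weyl_eq_kulkarniNomizu, map_add, map_sub, map_smul, map_smul,
    hg.tensorDerivation_riemann hss, tensorDerivation_kulkarniNomizu _ hRic hG,
    tensorDerivation_kulkarniNomizu _ hG hG]
  simp

end IsMetric

end LeviCivita

theorem stmt9_general {n : ℕ} (g ginv : Pt n → Fin n → Fin n → ℝ)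
    (hg : IsMetric g ginv) (hss : SemiSymmetric g ginv) :
    ∀ (x : Pt n) (lam μ α β γ δ : Fin n),
      (∑ ρ, riemannUp g ginv x ρ α lam μ * weyl g ginv x ![ρ, β, γ, δ]) +
      (∑ ρ, riemannUp g ginv x ρ β lam μ * weyl g ginv x ![α, ρ, γ, δ]) +
      (∑ ρ, riemannUp g ginv x ρ γ lam μ * weyl g ginv x ![α, β, ρ, δ]) +
      (∑ ρ, riemannUp g ginv x ρ δ lam μ * weyl g ginv x ![α, β, γ, ρ]) = 0 := by
  intro x lam μ α β γ δ
  simpa [tensorDerivation_apply_four, curvatureMatrix] using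
    congrFun (hg.tensorDerivation_weyl hss x lam μ) ![α, β, γ, δ]

/-- In any `n`-dimensional semi-symmetric semi-Riemannian manifold of
any signature (`n > 2`; in particular in any 2-symmetric one), the Riemann and Weyl
tensors satisfy
`R^ρ_{αλμ} C_{ρβγδ} + R^ρ_{βλμ} C_{αργδ} + R^ρ_{γλμ} C_{αβρδ} + R^ρ_{δλμ} C_{αβγρ} = 0`. -/
theorem stmt9 {n : ℕ} (hn : 2 < n) (g ginv : Pt n → Fin n → Fin n → ℝ)
    (hg : IsMetric g ginv) (hss : SemiSymmetric g ginv) :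
    ∀ (x : Pt n) (lam μ α β γ δ : Fin n),
      (∑ ρ, riemannUp g ginv x ρ α lam μ * weyl g ginv x ![ρ, β, γ, δ]) +
      (∑ ρ, riemannUp g ginv x ρ β lam μ * weyl g ginv x ![α, ρ, γ, δ]) +
      (∑ ρ, riemannUp g ginv x ρ γ lam μ * weyl g ginv x ![α, β, ρ, δ]) +
      (∑ ρ, riemannUp g ginv x ρ δ lam μ * weyl g ginv x ![α, β, γ, ρ]) = 0 :=
  stmt9_general g ginv hg hss
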